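/- Assume ‖A‖₂ < 1 and that F has a unique minimizer x̄ ∈ ℝ^N (i.e., F(x̄) < F(x) for all x ≠ x̄). Then the IRLS iterates converge to it: x^n → x̄ as n → ∞. -/

import Mathlib

/-!
`F_ε(x) = ‖Ax - b‖² + 2 ∑ λ_k (x_k² + ε²)^(q_k/2)` is a convex smoothing of `F = F_0`, and an
IRLS step is a majorize-minimize step for it: as `‖A‖ ≤ 1` and `u ↦ u^(q/2)` is concave,
`F_{ε_n}(x^{n+1}) + ‖x^{n+1} - x^n‖² ≤ F_{ε_n}(x^n)`. As `ε` is nonincreasing, the values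
`D_n = F_{ε_n}(x^n)` decrease to some `L`, the steps are square summable and `ε_n → 0`. At each of
the infinitely many times where `ε` strictly decreases, `‖x^{n+1} - x^n‖ < ε_n²`, which forces the
gradient of `F_{ε_n}` at `x^n` to be small; by convexity `L ≤ F(y)` for every `y`. The iterates stay
in the compact sublevel set `{F ≤ D_0}`, and each of their cluster points `x'` has
`F(x') ≤ L ≤ F(x̄)`, so `x' = x̄`.
-/

open Finset Filter Matrix Topology

/-- Squared Euclidean residual plus generalized sparsity penalty:
`F(x) = ‖Ax - b‖₂² + 2 ∑ₖ λₖ |xₖ|^{qₖ}`. -/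
noncomputable def Ffun {M N : ℕ} (A : Matrix (Fin M) (Fin N) ℝ) (b : Fin M → ℝ)
    (lam q : Fin N → ℝ) (x : Fin N → ℝ) : ℝ :=
  (∑ i, (A.mulVec x i - b i) ^ 2) + 2 * ∑ k, lam k * |x k| ^ (q k)

/-- The surrogate functional `G(x,a,w,ε)`. -/
noncomputable def Gfun {M N : ℕ} (A : Matrix (Fin M) (Fin N) ℝ) (b : Fin M → ℝ)
    (lam q : Fin N → ℝ) (x a w : Fin N → ℝ) (ε : ℝ) : ℝ :=
  (∑ i, (A.mulVec x i - b i) ^ 2) - (∑ i, (A.mulVec (x - a) i) ^ 2)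
    + (∑ k, (x k - a k) ^ 2)
    + ∑ k ∈ Finset.univ.filter (fun k => 1 ≤ q k ∧ q k < 2),
        lam k * (q k * w k * ((x k) ^ 2 + ε ^ 2)
          + (2 - q k) * (w k) ^ (q k / (q k - 2)))
    + ∑ k ∈ Finset.univ.filter (fun k => q k = 2),
        2 * lam k * ((x k) ^ 2 + ε ^ 2) * ((w k) ^ 2 - 2 * w k + 2)

/-- Euclidean (ℓ²) norm on `Fin N → ℝ`. -/
noncomputable def l2 {N : ℕ} (v : Fin N → ℝ) : ℝ :=
  Real.sqrt (∑ k, (v k) ^ 2)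

/-- Spectral (ℓ² operator) norm of a matrix. -/
noncomputable def specNorm {M N : ℕ} (A : Matrix (Fin M) (Fin N) ℝ) : ℝ :=
  ‖LinearMap.toContinuousLinearMap (Matrix.toEuclideanLin A)‖

namespace Real

private lemma rpow_eq_rpow_mul_one_add {p s t : ℝ} (hs : 0 < s) (ht : 0 ≤ t) :
    t ^ p = s ^ p * (1 + (t / s - 1)) ^ p := by
  rw [add_sub_cancel, ← mul_rpow hs.le (div_nonneg ht hs.le), mul_div_cancel₀ _ hs.ne']

private lemma rpow_mul_sub_one {p s t : ℝ} (hs : 0 < s) :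
    s ^ p * (p * (t / s - 1)) = p * s ^ (p - 1) * (t - s) := by
  rw [rpow_sub_one hs.ne']
  field_simp

lemma rpow_le_rpow_add_mul_sub {p s t : ℝ} (hp0 : 0 ≤ p) (hp1 : p ≤ 1) (hs : 0 < s)
    (ht : 0 ≤ t) : t ^ p ≤ s ^ p + p * s ^ (p - 1) * (t - s) := by
  have hu : -1 ≤ t / s - 1 := by linarith [div_nonneg ht hs.le]
  calc t ^ p = s ^ p * (1 + (t / s - 1)) ^ p := rpow_eq_rpow_mul_one_add hs ht
    _ ≤ s ^ p * (1 + p * (t / s - 1)) := by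
      gcongr; exact rpow_one_add_le_one_add_mul_self hu hp0 hp1
    _ = s ^ p + p * s ^ (p - 1) * (t - s) := by rw [mul_add, mul_one, rpow_mul_sub_one hs]

lemma rpow_add_mul_sub_le_rpow {p s t : ℝ} (hp : 1 ≤ p) (hs : 0 < s) (ht : 0 ≤ t) :
    s ^ p + p * s ^ (p - 1) * (t - s) ≤ t ^ p := by
  have hu : -1 ≤ t / s - 1 := by linarith [div_nonneg ht hs.le]
  calc s ^ p + p * s ^ (p - 1) * (t - s) = s ^ p * (1 + p * (t / s - 1)) := by
        rw [mul_add, mul_one, rpow_mul_sub_one hs]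
    _ ≤ s ^ p * (1 + (t / s - 1)) ^ p := by
      gcongr; exact one_add_mul_self_le_rpow_one_add hu hp
    _ = t ^ p := (rpow_eq_rpow_mul_one_add hs ht).symm

lemma sq_rpow_half (u p : ℝ) : (u ^ 2) ^ (p / 2) = |u| ^ p := by
  rw [← sq_abs, ← rpow_natCast, ← rpow_mul (abs_nonneg u)]
  congr 1; push_cast; ring

lemma sq_add_sq_rpow_tangent_le {q ε : ℝ} (hq : 1 ≤ q) (hε : ε ≠ 0) (s t : ℝ) :
    (s ^ 2 + ε ^ 2) ^ (q / 2) + q * (s ^ 2 + ε ^ 2) ^ ((q - 2) / 2) * s * (t - s)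
      ≤ (t ^ 2 + ε ^ 2) ^ (q / 2) := by
  set S := √(s ^ 2 + ε ^ 2)
  set T := √(t ^ 2 + ε ^ 2)
  have hS : 0 < S := sqrt_pos.2 (by positivity)
  have hS2 : S ^ 2 = s ^ 2 + ε ^ 2 := sq_sqrt (by positivity)
  have hT2 : T ^ 2 = t ^ 2 + ε ^ 2 := sq_sqrt (by positivity)
  have hpow : ∀ {U : ℝ} (r : ℝ), 0 ≤ U → (U ^ 2) ^ (r / 2) = U ^ r := fun r hU => by
    rw [sq_rpow_half, abs_of_nonneg hU]
  -- Cauchy–Schwarz for `(s, ε)` and `(t, ε)`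
  have hCS : s * t + ε ^ 2 ≤ S * T := by
    rw [← sqrt_mul (by positivity)]
    exact le_sqrt_of_sq_le (by nlinarith [sq_nonneg (s * ε - t * ε)])
  have hS1 : S ^ (q - 1) = S ^ (q - 2) * S := by rw [← rpow_add_one hS.ne']; ring_nf
  rw [← hS2, ← hT2, hpow q hS.le, hpow q (sqrt_nonneg _), hpow (q - 2) hS.le]
  calc S ^ q + q * S ^ (q - 2) * s * (t - s)
      ≤ S ^ q + q * S ^ (q - 2) * (S * T - S ^ 2) := by
        have : 0 ≤ q * S ^ (q - 2) := by positivity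
        nlinarith
    _ = S ^ q + q * S ^ (q - 1) * (T - S) := by rw [hS1]; ring
    _ ≤ T ^ q := rpow_add_mul_sub_le_rpow hq hS (sqrt_nonneg _)

end Real

section Functional

variable {M N : ℕ} (A : Matrix (Fin M) (Fin N) ℝ) (b : Fin M → ℝ)

lemma sum_sq_mulVec_le_of_specNorm_le_one (hA : specNorm A ≤ 1) (v : Fin N → ℝ) :
    ∑ i, (A *ᵥ v) i ^ 2 ≤ ∑ k, v k ^ 2 := by
  have h := (LinearMap.toContinuousLinearMap (Matrix.toEuclideanLin A)).le_opNorm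
    (WithLp.toLp 2 v)
  have hle : ‖WithLp.toLp 2 (A *ᵥ v)‖ ≤ ‖WithLp.toLp 2 v‖ :=
    h.trans (mul_le_of_le_one_left (norm_nonneg _) hA)
  simpa only [EuclideanSpace.real_norm_sq_eq] using pow_le_pow_left₀ (norm_nonneg _) hle 2

lemma sum_sq_mulVec_sub_eq (u v : Fin N → ℝ) :
    ∑ i, (A *ᵥ u - b) i ^ 2 = ∑ i, (A *ᵥ v - b) i ^ 2
      + 2 * ∑ k, (u - v) k * (Aᵀ *ᵥ (A *ᵥ v - b)) k + ∑ i, (A *ᵥ (u - v)) i ^ 2 := by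
  have hsplit : A *ᵥ u - b = (A *ᵥ v - b) + A *ᵥ (u - v) := by
    rw [Matrix.mulVec_sub]; abel
  have hadj : ∑ k, (u - v) k * (Aᵀ *ᵥ (A *ᵥ v - b)) k
      = ∑ i, (A *ᵥ v - b) i * (A *ᵥ (u - v)) i := by
    change (u - v) ⬝ᵥ (Aᵀ *ᵥ (A *ᵥ v - b)) = (A *ᵥ v - b) ⬝ᵥ (A *ᵥ (u - v))
    rw [Matrix.mulVec_transpose, Matrix.dotProduct_mulVec, dotProduct_comm]
  rw [hadj, hsplit, Finset.mul_sum, ← Finset.sum_add_distrib, ← Finset.sum_add_distrib]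
  exact Finset.sum_congr rfl fun i _ => by simp only [Pi.add_apply]; ring

end Functional

section Smoothing

variable {M N : ℕ} (A : Matrix (Fin M) (Fin N) ℝ) (b : Fin M → ℝ) (lam q : Fin N → ℝ)

noncomputable def Feps (ε : ℝ) (x : Fin N → ℝ) : ℝ :=
  ∑ i, (A *ᵥ x - b) i ^ 2 + 2 * ∑ k, lam k * (x k ^ 2 + ε ^ 2) ^ (q k / 2)

lemma Feps_zero : Feps A b lam q 0 = Ffun A b lam q := by
  ext x
  simp only [Feps, Ffun, Pi.sub_apply, ne_eq, OfNat.ofNat_ne_zero, not_false_eq_true,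
    zero_pow, add_zero, Real.sq_rpow_half]

variable {A b lam q}

lemma Feps_nonneg (hlam : ∀ k, 0 ≤ lam k) (ε : ℝ) (x : Fin N → ℝ) : 0 ≤ Feps A b lam q ε x := by
  unfold Feps
  have := Finset.sum_nonneg fun k (_ : k ∈ Finset.univ) =>
    mul_nonneg (hlam k) (Real.rpow_nonneg (by positivity : 0 ≤ x k ^ 2 + ε ^ 2) (q k / 2))
  positivity

lemma Feps_mono (hlam : ∀ k, 0 ≤ lam k) (hq : ∀ k, 0 ≤ q k) {ε ε' : ℝ} (hε : 0 ≤ ε)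
    (hεε' : ε ≤ ε') (x : Fin N → ℝ) : Feps A b lam q ε x ≤ Feps A b lam q ε' x := by
  unfold Feps
  gcongr with k
  · exact hlam k
  · exact div_nonneg (hq k) zero_le_two

lemma Ffun_le_Feps (hlam : ∀ k, 0 ≤ lam k) (hq : ∀ k, 0 ≤ q k) {ε : ℝ} (hε : 0 ≤ ε)
    (x : Fin N → ℝ) : Ffun A b lam q x ≤ Feps A b lam q ε x :=
  Feps_zero A b lam q ▸ Feps_mono hlam hq le_rfl hε x

lemma continuous_Feps_eps (hq : ∀ k, 0 ≤ q k) (x : Fin N → ℝ) :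
    Continuous fun ε => Feps A b lam q ε x := by
  have hterm : ∀ k, Continuous fun ε : ℝ => (x k ^ 2 + ε ^ 2) ^ (q k / 2) := fun k =>
    (continuous_const.add (continuous_pow 2)).rpow_const fun _ =>
      Or.inr (div_nonneg (hq k) zero_le_two)
  unfold Feps
  fun_prop

lemma continuous_Ffun (hq : ∀ k, 0 ≤ q k) : Continuous (Ffun A b lam q) := by
  have hterm : ∀ k, Continuous fun x : Fin N → ℝ => |x k| ^ q k := fun k =>
    (continuous_apply k).abs.rpow_const fun _ => Or.inr (hq k)
  unfold Ffun
  fun_prop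

lemma abs_le_of_Ffun_le (hlam : ∀ k, 0 < lam k) (hq : ∀ k, 0 < q k) {C : ℝ} {x : Fin N → ℝ}
    (hx : Ffun A b lam q x ≤ C) (k : Fin N) : |x k| ≤ (C / (2 * lam k)) ^ (q k)⁻¹ := by
  have hterm : lam k * |x k| ^ q k ≤ ∑ j, lam j * |x j| ^ q j :=
    Finset.single_le_sum (f := fun j => lam j * |x j| ^ q j)
      (fun j _ => mul_nonneg (hlam j).le (by positivity)) (Finset.mem_univ k)
  have hres : 0 ≤ ∑ i, (A.mulVec x i - b i) ^ 2 := by positivity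
  have hpow : |x k| ^ q k ≤ C / (2 * lam k) := by
    rw [le_div_iff₀ (by linarith [hlam k])]
    unfold Ffun at hx
    linarith
  calc |x k| = (|x k| ^ q k) ^ (q k)⁻¹ := by
        rw [← Real.rpow_mul (abs_nonneg _), mul_inv_cancel₀ (hq k).ne', Real.rpow_one]
    _ ≤ (C / (2 * lam k)) ^ (q k)⁻¹ := by gcongr; exact inv_nonneg.2 (hq k).le

lemma isCompact_setOf_Ffun_le (hlam : ∀ k, 0 < lam k) (hq : ∀ k, 0 < q k) (C : ℝ) :
    IsCompact {x | Ffun A b lam q x ≤ C} := by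
  set r := fun k => (C / (2 * lam k)) ^ (q k)⁻¹
  refine (isCompact_univ_pi fun k => isCompact_Icc (a := -r k) (b := r k)).of_isClosed_subset
    (isClosed_le (continuous_Ffun fun k => (hq k).le) continuous_const) fun x hx k _ => ?_
  exact abs_le.1 (abs_le_of_Ffun_le hlam hq hx k)

end Smoothing

lemma abs_le_l2 {N : ℕ} (v : Fin N → ℝ) (k : Fin N) : |v k| ≤ l2 v := by
  rw [l2, ← Real.sqrt_sq_eq_abs]
  exact Real.sqrt_le_sqrt <| Finset.single_le_sum (f := fun j => v j ^ 2)
    (fun j _ => sq_nonneg _) (Finset.mem_univ k)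

section Step

variable {M N : ℕ} (A : Matrix (Fin M) (Fin N) ℝ) (b : Fin M → ℝ) (lam q : Fin N → ℝ)

noncomputable def irlsWeight (ε : ℝ) (x : Fin N → ℝ) (k : Fin N) : ℝ :=
  (x k ^ 2 + ε ^ 2) ^ ((q k - 2) / 2)

noncomputable def irlsStep (ε : ℝ) (x : Fin N → ℝ) (k : Fin N) : ℝ :=
  (1 + lam k * q k * irlsWeight q ε x k)⁻¹ * (x k + (Aᵀ *ᵥ b) k - (Aᵀ *ᵥ (A *ᵥ x)) k)

variable {A b lam q} {ε : ℝ}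

lemma one_add_mul_irlsStep {x : Fin N → ℝ} {k : Fin N} (hlam : 0 ≤ lam k) (hq : 0 ≤ q k) :
    (1 + lam k * q k * irlsWeight q ε x k) * irlsStep A b lam q ε x k
      = x k - (Aᵀ *ᵥ (A *ᵥ x - b)) k := by
  have hw : 0 ≤ irlsWeight q ε x k := Real.rpow_nonneg (by positivity) _
  rw [irlsStep, ← mul_assoc, mul_inv_cancel₀ (by positivity), one_mul, Matrix.mulVec_sub,
    Pi.sub_apply]
  ring

lemma Feps_irlsStep_add_le (hA : specNorm A ≤ 1) (hlam : ∀ k, 0 ≤ lam k)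
    (hq0 : ∀ k, 0 ≤ q k) (hq2 : ∀ k, q k ≤ 2) (hε : ε ≠ 0) (x : Fin N → ℝ) :
    Feps A b lam q ε (irlsStep A b lam q ε x) + ∑ k, (irlsStep A b lam q ε x k - x k) ^ 2
      ≤ Feps A b lam q ε x := by
  set y := irlsStep A b lam q ε x
  set m := fun k => lam k * q k * irlsWeight q ε x k
  set g := Aᵀ *ᵥ (A *ᵥ x - b)
  have hquad : ∑ i, (A *ᵥ y - b) i ^ 2
      ≤ ∑ i, (A *ᵥ x - b) i ^ 2 + ∑ k, (2 * (y k - x k) * g k + (y k - x k) ^ 2) := by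
    have := sum_sq_mulVec_le_of_specNorm_le_one A hA (y - x)
    simp only [Pi.sub_apply] at this
    rw [sum_sq_mulVec_sub_eq A b y x, Finset.sum_add_distrib, Finset.mul_sum]
    simp only [Pi.sub_apply, mul_assoc]
    linarith
  have hstep (k : Fin N) : 2 * (lam k * (y k ^ 2 + ε ^ 2) ^ (q k / 2))
      + (2 * (y k - x k) * g k + (y k - x k) ^ 2) + (y k - x k) ^ 2
      ≤ 2 * (lam k * (x k ^ 2 + ε ^ 2) ^ (q k / 2)) := by
    -- concavity of `u ↦ u ^ (q/2)` at `u = x_k² + ε²`, where its slope is `(q/2) w_k`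
    have hpen : 2 * (lam k * (y k ^ 2 + ε ^ 2) ^ (q k / 2))
        ≤ 2 * (lam k * (x k ^ 2 + ε ^ 2) ^ (q k / 2)) + m k * (y k ^ 2 - x k ^ 2) := by
      have htan := Real.rpow_le_rpow_add_mul_sub (p := q k / 2) (s := x k ^ 2 + ε ^ 2)
        (t := y k ^ 2 + ε ^ 2) (by linarith [hq0 k]) (by linarith [hq2 k]) (by positivity)
        (by positivity)
      have hw : irlsWeight q ε x k = (x k ^ 2 + ε ^ 2) ^ (q k / 2 - 1) := by
        rw [irlsWeight]; ring_nf
      have := mul_le_mul_of_nonneg_left htan (mul_nonneg zero_le_two (hlam k))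
      simp only [m, hw]
      linarith
    have hspec : (1 + m k) * y k = x k - g k := one_add_mul_irlsStep (hlam k) (hq0 k)
    have hm : 0 ≤ m k :=
      mul_nonneg (mul_nonneg (hlam k) (hq0 k)) (Real.rpow_nonneg (by positivity) _)
    have hkey : 2 * (y k - x k) * g k + 2 * (y k - x k) ^ 2 + m k * (y k ^ 2 - x k ^ 2)
        = -(m k * (y k - x k) ^ 2) := by
      linear_combination (2 * (y k - x k)) * hspec
    linarith [mul_nonneg hm (sq_nonneg (y k - x k))]
  have hsum := Finset.sum_le_sum fun k (_ : k ∈ Finset.univ) => hstep k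
  simp only [Finset.sum_add_distrib, ← Finset.mul_sum] at hsum hquad
  unfold Feps
  linarith

/- The sum on the right is `⟨∇F_ε(x), x - y⟩`: by the defining equation of the step,
`∂_k F_ε(x) = 2 (1 + λ_k q_k w_k) (x_k - irlsStep … x k)`. -/
lemma Feps_le_Feps_add_irlsStep (hlam : ∀ k, 0 ≤ lam k) (hq : ∀ k, 1 ≤ q k) (hε : ε ≠ 0)
    (x y : Fin N → ℝ) :
    Feps A b lam q ε x ≤ Feps A b lam q ε y + 2 * ∑ k,
      (1 + lam k * q k * irlsWeight q ε x k) * (x k - irlsStep A b lam q ε x k) * (x k - y k) := by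
  set g := Aᵀ *ᵥ (A *ᵥ x - b)
  have hquad : ∑ i, (A *ᵥ x - b) i ^ 2 + 2 * ∑ k, (y k - x k) * g k ≤ ∑ i, (A *ᵥ y - b) i ^ 2 := by
    rw [sum_sq_mulVec_sub_eq A b y x]
    simp only [Pi.sub_apply]
    linarith [Finset.sum_nonneg fun i (_ : i ∈ Finset.univ) => sq_nonneg ((A *ᵥ (y - x)) i)]
  have hstep (k : Fin N) : 2 * (lam k * (x k ^ 2 + ε ^ 2) ^ (q k / 2))
      ≤ 2 * ((y k - x k) * g k) + 2 * (lam k * (y k ^ 2 + ε ^ 2) ^ (q k / 2))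
        + 2 * ((1 + lam k * q k * irlsWeight q ε x k) * (x k - irlsStep A b lam q ε x k)
          * (x k - y k)) := by
    have htan := mul_le_mul_of_nonneg_left (Real.sq_add_sq_rpow_tangent_le (hq k) hε (x k) (y k))
      (hlam k)
    have hspec := one_add_mul_irlsStep (A := A) (b := b) (ε := ε) (x := x) (hlam k)
      (zero_le_one.trans (hq k))
    have hkey : 2 * ((y k - x k) * g k) + 2 * ((1 + lam k * q k * irlsWeight q ε x k)
        * (x k - irlsStep A b lam q ε x k) * (x k - y k))
        = -(2 * (lam k * (q k * irlsWeight q ε x k * x k * (y k - x k)))) := by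
      linear_combination (-2 * (x k - y k)) * hspec
    rw [irlsWeight] at hkey ⊢
    linarith
  have hsum := Finset.sum_le_sum fun k (_ : k ∈ Finset.univ) => hstep k
  simp only [Finset.sum_add_distrib, ← Finset.mul_sum] at hsum
  unfold Feps
  linarith

lemma abs_one_add_mul_sub_irlsStep_le {x : Fin N → ℝ} {k : Fin N} (hlam : 0 ≤ lam k)
    (hq0 : 0 ≤ q k) (hq2 : q k ≤ 2) (hε : ε ≠ 0) (hd : |x k - irlsStep A b lam q ε x k| ≤ ε ^ 2) :
    |(1 + lam k * q k * irlsWeight q ε x k) * (x k - irlsStep A b lam q ε x k)|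
      ≤ |x k - irlsStep A b lam q ε x k| + lam k * q k * (ε ^ 2) ^ (q k / 2) := by
  have hε2 : 0 < ε ^ 2 := by positivity
  have hw0 : 0 ≤ irlsWeight q ε x k := Real.rpow_nonneg (by positivity) _
  have hw : irlsWeight q ε x k ≤ (ε ^ 2) ^ ((q k - 2) / 2) :=
    Real.rpow_le_rpow_of_nonpos hε2 (by nlinarith [sq_nonneg (x k)]) (by linarith)
  have hpow : (ε ^ 2) ^ ((q k - 2) / 2) * ε ^ 2 = (ε ^ 2) ^ (q k / 2) := by
    rw [← Real.rpow_add_one hε2.ne']; ring_nf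
  rw [abs_mul, abs_of_nonneg (by positivity), add_mul, one_mul, mul_assoc, ← hpow]
  gcongr

lemma Feps_le_Feps_add_of_l2_le (hlam : ∀ k, 0 ≤ lam k) (hq1 : ∀ k, 1 ≤ q k)
    (hq2 : ∀ k, q k ≤ 2) (hε : ε ≠ 0) {x : Fin N → ℝ}
    (hd : l2 (irlsStep A b lam q ε x - x) ≤ ε ^ 2) {r : Fin N → ℝ} (hx : ∀ k, |x k| ≤ r k)
    (y : Fin N → ℝ) :
    Feps A b lam q ε x ≤ Feps A b lam q ε y + 2 * ∑ k,
      (l2 (irlsStep A b lam q ε x - x) + lam k * q k * (ε ^ 2) ^ (q k / 2)) * (r k + |y k|) := by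
  refine (Feps_le_Feps_add_irlsStep hlam hq1 hε x y).trans <| add_le_add_right
    (mul_le_mul_of_nonneg_left (Finset.sum_le_sum fun k _ => ?_) zero_le_two) _
  have hdk : |x k - irlsStep A b lam q ε x k| ≤ l2 (irlsStep A b lam q ε x - x) := by
    rw [abs_sub_comm]; exact abs_le_l2 (irlsStep A b lam q ε x - x) k
  have hcoef := (abs_one_add_mul_sub_irlsStep_le (hlam k) (zero_le_one.trans (hq1 k)) (hq2 k) hε
    (hdk.trans hd)).trans (add_le_add_left hdk _)
  have hxy : |x k - y k| ≤ r k + |y k| := (abs_sub _ _).trans (by linarith [hx k])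
  calc _ ≤ |(1 + lam k * q k * irlsWeight q ε x k) * (x k - irlsStep A b lam q ε x k)|
        * |x k - y k| := (le_abs_self _).trans (abs_mul _ _).le
    _ ≤ _ := mul_le_mul hcoef hxy (abs_nonneg _) ((abs_nonneg _).trans hcoef)

end Step

lemma frequently_succ_lt_of_tendsto_zero {u : ℕ → ℝ} (hpos : ∀ n, 0 < u n)
    (hu : Tendsto u atTop (𝓝 0)) : ∃ᶠ n in atTop, u (n + 1) < u n := by
  by_contra h
  obtain ⟨m, hm⟩ := eventually_atTop.1 (not_frequently.1 h)
  have hge : ∀ n, m ≤ n → u m ≤ u n := fun n hmn => by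
    induction n, hmn using Nat.le_induction with
    | base => rfl
    | succ n hmn ih => exact ih.trans (not_lt.1 (hm n hmn))
  exact (hpos m).not_ge (ge_of_tendsto hu (eventually_atTop.2 ⟨m, hge⟩))

lemma tendsto_zero_of_succ_add_sq_le {D e : ℕ → ℝ} (hD : ∀ n, 0 ≤ D n) (he : ∀ n, 0 ≤ e n)
    (h : ∀ n, D (n + 1) + e n ^ 2 ≤ D n) : Tendsto e atTop (𝓝 0) := by
  have hpartial : ∀ m, ∑ n ∈ Finset.range m, e n ^ 2 + D m ≤ D 0 := fun m => by
    induction m with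
    | zero => simp
    | succ m ih => rw [Finset.sum_range_succ]; linarith [h m]
  have hsq : Tendsto (fun n => e n ^ 2) atTop (𝓝 0) :=
    (summable_of_sum_range_le (fun n => sq_nonneg _)
      fun m => by linarith [hpartial m, hD m]).tendsto_atTop_zero
  simpa [Real.sqrt_sq (he _)] using hsq.sqrt

section EpsilonUpdate

variable {eps δ : ℕ → ℝ} {α : ℝ}

lemma eps_pos_of_update (hupd : ∀ n, eps (n + 1) = min (eps n) (√(δ n + α ^ (n + 1))))
    (h0 : 0 < eps 0) (hα : 0 < α) (hδ : ∀ n, 0 ≤ δ n) (n : ℕ) : 0 < eps n := by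
  induction n with
  | zero => exact h0
  | succ n ih =>
    rw [hupd n]
    exact lt_min ih (Real.sqrt_pos.2 (add_pos_of_nonneg_of_pos (hδ n) (pow_pos hα _)))

lemma tendsto_eps_of_update (hupd : ∀ n, eps (n + 1) = min (eps n) (√(δ n + α ^ (n + 1))))
    (hpos : ∀ n, 0 ≤ eps n) (hα0 : 0 ≤ α) (hα1 : α < 1) (hδ : Tendsto δ atTop (𝓝 0)) :
    Tendsto eps atTop (𝓝 0) := by
  have hα : Tendsto (fun n => α ^ (n + 1)) atTop (𝓝 0) :=
    (tendsto_pow_atTop_nhds_zero_of_lt_one hα0 hα1).comp (tendsto_add_atTop_nat 1)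
  have hbound : Tendsto (fun n => √(δ n + α ^ (n + 1))) atTop (𝓝 0) := by
    simpa using (hδ.add hα).sqrt
  exact (tendsto_add_atTop_iff_nat 1).1 <|
    squeeze_zero (fun n => hpos _) (fun n => (hupd n).le.trans (min_le_right _ _)) hbound

lemma lt_sq_of_update_lt (hupd : ∀ n, eps (n + 1) = min (eps n) (√(δ n + α ^ (n + 1))))
    {n : ℕ} (hpos : 0 < eps n) (hα : 0 ≤ α) (hlt : eps (n + 1) < eps n) : δ n < eps n ^ 2 := by
  rw [hupd n, min_lt_iff, lt_self_iff_false, false_or, Real.sqrt_lt' hpos] at hlt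
  linarith [pow_nonneg hα (n + 1)]

end EpsilonUpdate

section Iteration

variable {M N : ℕ} {A : Matrix (Fin M) (Fin N) ℝ} {b : Fin M → ℝ} {lam q : Fin N → ℝ}
  {x : ℕ → Fin N → ℝ} {eps : ℕ → ℝ}

lemma Feps_succ_add_sq_le (hA : specNorm A ≤ 1) (hlam : ∀ k, 0 ≤ lam k)
    (hq0 : ∀ k, 0 ≤ q k) (hq2 : ∀ k, q k ≤ 2)
    (hstep : ∀ n, x (n + 1) = irlsStep A b lam q (eps n) (x n)) (hpos : ∀ n, 0 < eps n)
    (hanti : ∀ n, eps (n + 1) ≤ eps n) (n : ℕ) :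
    Feps A b lam q (eps (n + 1)) (x (n + 1)) + l2 (x (n + 1) - x n) ^ 2
      ≤ Feps A b lam q (eps n) (x n) := by
  rw [l2, Real.sq_sqrt (Finset.sum_nonneg fun k _ => sq_nonneg _)]
  calc _ ≤ Feps A b lam q (eps n) (x (n + 1)) + ∑ k, (x (n + 1) - x n) k ^ 2 := by
        gcongr
        exact Feps_mono hlam hq0 (hpos _).le (hanti n) _
    _ ≤ Feps A b lam q (eps n) (x n) := by
        rw [hstep n]
        exact Feps_irlsStep_add_le hA hlam hq0 hq2 (hpos n).ne' (x n)

lemma le_Ffun_of_tendsto_Feps (hlam : ∀ k, 0 ≤ lam k) (hq1 : ∀ k, 1 ≤ q k)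
    (hq2 : ∀ k, q k ≤ 2) {α : ℝ} (hα : 0 ≤ α)
    (hstep : ∀ n, x (n + 1) = irlsStep A b lam q (eps n) (x n))
    (hupd : ∀ n, eps (n + 1) = min (eps n) (√(l2 (x (n + 1) - x n) + α ^ (n + 1))))
    (hpos : ∀ n, 0 < eps n) (heps : Tendsto eps atTop (𝓝 0))
    (hdiff : Tendsto (fun n => l2 (x (n + 1) - x n)) atTop (𝓝 0))
    {r : Fin N → ℝ} (hx : ∀ n k, |x n k| ≤ r k) {L : ℝ}
    (hL : Tendsto (fun n => Feps A b lam q (eps n) (x n)) atTop (𝓝 L)) (y : Fin N → ℝ) :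
    L ≤ Ffun A b lam q y := by
  have hq0 : ∀ k, 0 ≤ q k := fun k => zero_le_one.trans (hq1 k)
  set B := fun n => Feps A b lam q (eps n) y + 2 * ∑ k,
    (l2 (x (n + 1) - x n) + lam k * q k * (eps n ^ 2) ^ (q k / 2)) * (r k + |y k|)
  -- at the times where `ε` decreases, `x^{n+1}` is close enough to `x^n` to be nearly stationary
  have hfreq : ∃ᶠ n in atTop, Feps A b lam q (eps n) (x n) ≤ B n :=
    (frequently_succ_lt_of_tendsto_zero hpos heps).mono fun n hn => by
      have hd := (lt_sq_of_update_lt hupd (hpos n) hα hn).le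
      simp only [B]
      rw [hstep n] at hd ⊢
      exact Feps_le_Feps_add_of_l2_le hlam hq1 hq2 (hpos n).ne' hd (hx n) y
  have hB : Tendsto B atTop (𝓝 (Ffun A b lam q y)) := by
    have hFeps : Tendsto (fun n => Feps A b lam q (eps n) y) atTop (𝓝 (Ffun A b lam q y)) := by
      rw [← Feps_zero A b lam q]
      exact ((continuous_Feps_eps hq0 y).tendsto 0).comp heps
    have hcoef (k : Fin N) : Tendsto (fun n => l2 (x (n + 1) - x n)
        + lam k * q k * (eps n ^ 2) ^ (q k / 2)) atTop (𝓝 0) := by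
      have hpow := ((Real.continuous_rpow_const (div_nonneg (hq0 k) zero_le_two)).tendsto _).comp
        (heps.pow 2)
      simpa [Function.comp_def, Real.zero_rpow (by linarith [hq1 k] : q k / 2 ≠ 0)] using
        hdiff.add (hpow.const_mul (lam k * q k))
    simpa using hFeps.add
      ((tendsto_finsetSum _ fun k _ => (hcoef k).mul_const (r k + |y k|)).const_mul 2)
  exact (isClosed_le continuous_fst continuous_snd).mem_of_frequently_of_tendsto hfreq
    (hL.prodMk_nhds hB)

end Iteration

/-- if `‖A‖₂ < 1` and `F` has a unique minimizer `x̄`, then the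
IRLS iterates converge to it: `xⁿ → x̄`. -/
theorem stmt_16 {M N : ℕ} (A : Matrix (Fin M) (Fin N) ℝ) (hA : specNorm A < 1)
    (b : Fin M → ℝ) (lam q : Fin N → ℝ)
    (hlam : ∀ k, 0 < lam k) (hq : ∀ k, 1 ≤ q k ∧ q k ≤ 2)
    (x : ℕ → Fin N → ℝ) (eps : ℕ → ℝ) (w : ℕ → Fin N → ℝ)
    (α : ℝ) (hα0 : 0 < α) (hα1 : α < 1) (heps0 : 0 < eps 0)
    (hw : ∀ n k, w n k = ((x n k) ^ 2 + (eps n) ^ 2) ^ ((q k - 2) / 2))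
    (hxiter : ∀ n k, x (n + 1) k =
      (1 + lam k * q k * w n k)⁻¹
        * (x n k + Aᵀ.mulVec b k - Aᵀ.mulVec (A.mulVec (x n)) k))
    (hepsiter : ∀ n, eps (n + 1) =
      min (eps n) (Real.sqrt (l2 (x (n + 1) - x n) + α ^ (n + 1))))
    (xbar : Fin N → ℝ)
    (hunique : ∀ y : Fin N → ℝ, y ≠ xbar →
      Ffun A b lam q xbar < Ffun A b lam q y) :
    Tendsto x atTop (nhds xbar) := by
  have hlam0 : ∀ k, 0 ≤ lam k := fun k => (hlam k).le
  have hq0 : ∀ k, 0 < q k := fun k => one_pos.trans_le (hq k).1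
  have hstep : ∀ n, x (n + 1) = irlsStep A b lam q (eps n) (x n) := fun n => funext fun k => by
    rw [hxiter, hw]; rfl
  have hpos := eps_pos_of_update hepsiter heps0 hα0 fun n => Real.sqrt_nonneg _
  set D := fun n => Feps A b lam q (eps n) (x n)
  have hdesc := Feps_succ_add_sq_le hA.le hlam0 (fun k => (hq0 k).le) (fun k => (hq k).2) hstep
    hpos fun n => (hepsiter n).trans_le (min_le_left _ _)
  have hD : Antitone D :=
    antitone_nat_of_succ_le fun n => le_of_add_le_of_nonneg_left (hdesc n) (sq_nonneg _)
  have hdiff := tendsto_zero_of_succ_add_sq_le (fun n => Feps_nonneg hlam0 _ _)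
    (fun n => Real.sqrt_nonneg _) hdesc
  have heps := tendsto_eps_of_update hepsiter (fun n => (hpos n).le) hα0.le hα1 hdiff
  have hF (m n : ℕ) (hmn : m ≤ n) : Ffun A b lam q (x n) ≤ D m :=
    (Ffun_le_Feps hlam0 (fun k => (hq0 k).le) (hpos n).le _).trans (hD hmn)
  have hinf : ⨅ n, D n ≤ Ffun A b lam q xbar :=
    le_Ffun_of_tendsto_Feps hlam0 (fun k => (hq k).1) (fun k => (hq k).2) hα0.le hstep hepsiter
      hpos heps hdiff (fun n k => abs_le_of_Ffun_le hlam hq0 (hF 0 n n.zero_le) k)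
      (tendsto_atTop_ciInf hD ⟨0, Set.forall_mem_range.2 fun n => Feps_nonneg hlam0 _ _⟩) xbar
  refine (isCompact_setOf_Ffun_le hlam hq0 (D 0)).tendsto_nhds_of_unique_mapClusterPt
    (.of_forall fun n => hF 0 n n.zero_le) fun x' _ hx' => ?_
  have hx'inf : Ffun A b lam q x' ≤ ⨅ n, D n := le_ciInf fun m =>
    (isClosed_le (continuous_Ffun fun k => (hq0 k).le) continuous_const).mem_of_mapClusterPt hx'
      (eventually_atTop.2 ⟨m, hF m⟩)
  by_contra hne
  exact (hunique x' hne).not_ge (hx'inf.trans hinf)
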